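/- arXiv:1003.0580 — 2 statements merged into one kernel-verified Lean document; each statement's English description precedes it below -/
import Mathlib

section
/- There exists a collection {𝒟_j}_{j∈ℤ} of partitions of S, each 𝒟_j consisting of pairwise disjoint Calderón–Zygmund sets, such that: (i) for every j ∈ ℤ, S = ∪_{R∈𝒟_j} R; (ii) if ℓ ≤ k, R ∈ 𝒟_ℓ and R' ∈ 𝒟_k, then either R ⊆ R' or R ∩ R' = ∅; (iii) for every j ∈ ℤ and R ∈ 𝒟_j, there exists a unique R' ∈ 𝒟_{j+1} such that R ⊆ R', and it satisfies ρ(R') ≤ 2ⁿρ(R); (iv) for every j ∈ ℤ, every R ∈ 𝒟_j can be decomposed into k mutually disjoint sets R₁, …, R_k ∈ 𝒟_{j−1}, with k = 2 or k = 2ⁿ, such that R = ∪_{i=1}^k Rᵢ and ρ(R)/2ⁿ ≤ ρ(Rᵢ) ≤ (2/3)ρ(R) for all i; (v) for every x ∈ S, denoting by R_j^x the unique set in 𝒟_j containing x, one has ρ(R_j^x) → 0 as j → −∞ and ρ(R_j^x) → ∞ as j → +∞. -/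
open MeasureTheory Set Filter
open scoped ENNReal NNReal Topology

noncomputable section

/-- The `ax+b`-group `S = ℝⁿ ⋉ ℝ`, as a measure space with its right Haar
measure `ρ`, which is Lebesgue measure `dx dt` on `ℝⁿ × ℝ`. -/
abbrev Sp (n : ℕ) : Type := (Fin n → ℝ) × ℝ

/-- `Q` is a dyadic cube in `ℝⁿ` with side length `L` and center `c`. -/
def IsDyadicCube (n : ℕ) (Q : Set (Fin n → ℝ)) (L : ℝ) (c : Fin n → ℝ) : Prop :=
  ∃ (k : ℤ) (m : Fin n → ℤ), L = 2 ^ k ∧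
    Q = {x | ∀ i, (m i : ℝ) * 2 ^ k ≤ x i ∧ x i < ((m i : ℝ) + 1) * 2 ^ k} ∧
    c = fun i => ((m i : ℝ) + 1 / 2) * 2 ^ k

/-- Admissibility of the parameters `(Q, L, c, t, r)` of a Calderón–Zygmund set:
`Q` is a dyadic cube with side length `L` and center `c`, `r > 0`, and
`e² eᵗ r ≤ L < e⁸ eᵗ r` if `r < 1`, while `eᵗ e^{2r} ≤ L < eᵗ e^{8r}` if `r ≥ 1`. -/
def CZParam (n : ℕ) (Q : Set (Fin n → ℝ)) (L : ℝ) (c : Fin n → ℝ) (t r : ℝ) : Prop :=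
  IsDyadicCube n Q L c ∧ 0 < r ∧
    (r < 1 → Real.exp 2 * Real.exp t * r ≤ L ∧ L < Real.exp 8 * Real.exp t * r) ∧
    (1 ≤ r → Real.exp t * Real.exp (2 * r) ≤ L ∧ L < Real.exp t * Real.exp (8 * r))

/-- The set `Q × [t - r, t + r)` in `S`. -/
def czSet (n : ℕ) (Q : Set (Fin n → ℝ)) (t r : ℝ) : Set (Sp n) :=
  Q ×ˢ Set.Ico (t - r) (t + r)

/-- `R` is a Calderón–Zygmund set, i.e. a member of the family `ℛ`. -/
def IsCZSet (n : ℕ) (R : Set (Sp n)) : Prop :=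
  ∃ Q L c t r, CZParam n Q L c t r ∧ R = czSet n Q t r

/-- Inverse hyperbolic cosine. -/
def arcoshR (x : ℝ) : ℝ := Real.log (x + Real.sqrt (x ^ 2 - 1))

/-- The left-invariant Riemannian (hyperbolic) metric on `S`, given by
`cosh d((x,t),(x',t')) = (e^{t'-t} + e^{t-t'} + e^{-t-t'} |x-x'|²) / 2`. -/
def hypDist (n : ℕ) (p q : Sp n) : ℝ :=
  arcoshR ((Real.exp (q.2 - p.2) + Real.exp (p.2 - q.2) +
    Real.exp (-p.2 - q.2) * (∑ i, (p.1 i - q.1 i) ^ 2)) / 2)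

/-- The open ball of center `p` and radius `r` for the hyperbolic metric. -/
def hypBall (n : ℕ) (p : Sp n) (r : ℝ) : Set (Sp n) := {q | hypDist n p q < r}

/-- The maximal function associated with a family `𝒜` of subsets of `S`:
`x ↦ sup { ρ(R)⁻¹ ∫_R |f| dρ : R ∈ 𝒜, x ∈ R }`. -/
def maximalFn (n : ℕ) (𝒜 : Set (Set (Sp n))) (f : Sp n → ℝ) (x : Sp n) : ℝ≥0∞ :=
  ⨆ R ∈ 𝒜, ⨆ (_ : x ∈ R), (volume R)⁻¹ * ∫⁻ y in R, ‖f y‖₊ ∂volume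

/-- The sharp maximal function associated with a family `𝒜` of subsets of `S`:
`x ↦ sup { ρ(R)⁻¹ ∫_R |f - f_R| dρ : R ∈ 𝒜, x ∈ R }`, where `f_R = ρ(R)⁻¹ ∫_R f dρ`. -/
def sharpFn (n : ℕ) (𝒜 : Set (Set (Sp n))) (f : Sp n → ℝ) (x : Sp n) : ℝ≥0∞ :=
  ⨆ R ∈ 𝒜, ⨆ (_ : x ∈ R), (volume R)⁻¹ *
    ∫⁻ y in R, ENNReal.ofReal |f y - (volume R).toReal⁻¹ * ∫ z in R, f z ∂volume| ∂volume

/-- The `L^p`-norm (`p ∈ (0,∞]`) of an `ℝ≥0∞`-valued function. -/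
def lpNormE {α : Type*} [MeasurableSpace α] (g : α → ℝ≥0∞) (p : ℝ≥0∞)
    (μ : Measure α) : ℝ≥0∞ :=
  if p = ∞ then essSup g μ else (∫⁻ x, g x ^ p.toReal ∂μ) ^ (1 / p.toReal)

/-- `M` is a parent of `R`: both are Calderón–Zygmund sets, `M` can be decomposed into
`k` pairwise disjoint Calderón–Zygmund sets (`k = 2` or `k = 2ⁿ`) one of which is `R`,
and `(3/2) ρ(R) ≤ ρ(M) ≤ max{3, 2ⁿ} ρ(R)`. -/
def IsParent (n : ℕ) (M R : Set (Sp n)) : Prop :=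
  IsCZSet n M ∧ IsCZSet n R ∧
    (∃ k : ℕ, (k = 2 ∨ k = 2 ^ n) ∧ ∃ Rs : Fin k → Set (Sp n),
      (∀ i, IsCZSet n (Rs i)) ∧ Pairwise (Function.onFun Disjoint Rs) ∧
      M = ⋃ i, Rs i ∧ ∃ i, Rs i = R) ∧
    (3 / 2 : ℝ≥0∞) * volume R ≤ volume M ∧
    volume M ≤ (max 3 (2 ^ n) : ℕ) * volume R

/-- A dyadic grid on `S`: a collection `{𝒟_j}_{j ∈ ℤ}` of partitions of `S` into
pairwise disjoint Calderón–Zygmund sets with the nesting, parent, splitting and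
limiting properties (i)–(v) of Theorem 3.1. -/
def IsDyadicGrid (n : ℕ) (D : ℤ → Set (Set (Sp n))) : Prop :=
  (∀ j, ∀ R ∈ D j, IsCZSet n R) ∧
  (∀ j, (D j).PairwiseDisjoint id) ∧
  (∀ j, ⋃₀ D j = Set.univ) ∧
  (∀ l k : ℤ, l ≤ k → ∀ R ∈ D l, ∀ R' ∈ D k, R ⊆ R' ∨ R ∩ R' = ∅) ∧
  (∀ j, ∀ R ∈ D j, ∃! R', R' ∈ D (j + 1) ∧ R ⊆ R') ∧
  (∀ j, ∀ R ∈ D j, ∀ R' ∈ D (j + 1), R ⊆ R' → volume R' ≤ 2 ^ n * volume R) ∧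
  (∀ j, ∀ R ∈ D j, ∃ k : ℕ, (k = 2 ∨ k = 2 ^ n) ∧ ∃ Rs : Fin k → Set (Sp n),
    (∀ i, Rs i ∈ D (j - 1)) ∧ Pairwise (Function.onFun Disjoint Rs) ∧ R = ⋃ i, Rs i ∧
    ∀ i, volume R / 2 ^ n ≤ volume (Rs i) ∧ volume (Rs i) ≤ (2 / 3 : ℝ≥0∞) * volume R) ∧
  (∀ x : Sp n, ∀ Rx : ℤ → Set (Sp n), (∀ j, Rx j ∈ D j ∧ x ∈ Rx j) →
    Tendsto (fun j => volume (Rx j)) atBot (nhds 0) ∧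
    Tendsto (fun j => volume (Rx j)) atTop (nhds ⊤))

/-- `a` is an `H¹`-atom supported in a set of the family `𝒜`: `a ∈ L¹` is supported in
some `R ∈ 𝒜`, `‖a‖_∞ ≤ ρ(R)⁻¹` and `∫_S a dρ = 0`. -/
def IsAtomIn (n : ℕ) (𝒜 : Set (Set (Sp n))) (a : Sp n → ℂ) : Prop :=
  ∃ R ∈ 𝒜, Function.support a ⊆ R ∧
    (∀ᵐ x ∂(volume : Measure (Sp n)), ‖a x‖ ≤ (volume R).toReal⁻¹) ∧
    Integrable a volume ∧ ∫ x, a x ∂(volume : Measure (Sp n)) = 0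

/-- `g = ∑_j lam_j a_j` is an atomic decomposition of `g` with atoms supported in sets of
the family `𝒜`: the `a_j` are atoms, `∑_j |lam_j| < ∞` and the series converges to `g`
in `L¹`. -/
def IsAtomicDecomp (n : ℕ) (𝒜 : Set (Set (Sp n))) (g : Sp n → ℂ)
    (lam : ℕ → ℂ) (a : ℕ → Sp n → ℂ) : Prop :=
  Integrable g volume ∧ (∀ j, IsAtomIn n 𝒜 (a j)) ∧ Summable (fun j => ‖lam j‖) ∧
    Tendsto (fun N => ∫ x, ‖g x - ∑ j ∈ Finset.range N, lam j * a j x‖ ∂volume)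
      atTop (nhds 0)

/-- The atomic `H¹`-norm of `g` associated with the family `𝒜`: the infimum of
`∑_j |lam_j|` over all atomic decompositions of `g` with atoms supported in sets of `𝒜`. -/
def H1Norm (n : ℕ) (𝒜 : Set (Set (Sp n))) (g : Sp n → ℂ) : ℝ :=
  sInf {s : ℝ | ∃ lam a, IsAtomicDecomp n 𝒜 g lam a ∧ s = ∑' j, ‖lam j‖}

end

/-!
Level `j` of the grid consists of the products `Q × I` of a dyadic cube `Q` of side `2 ^ s` and a
dyadic interval `I` of length `2 ^ m` with `s + m = j`, where `s` runs from the least exponent that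
is admissible over `I` (`minSideExp`) up to the least one admissible over the dyadic parent of `I`.
Going up one level doubles the cube while `s` stays in that range and doubles the interval at its
top end; going down reverses this, which gives (iii) and (iv) with factors `2ⁿ` or `2`.
The range is never empty and always admissible because moving the centre of an interval by at most
its radius `r` and passing to radius `2r` can only raise the lower admissibility bound, and by
less than a factor two relative to the upper one. For a time coordinate `t`, the levels using the
interval of length `2 ^ m` around `t` form the window `[levelStart t m, levelStart t (m + 1))` of
a strictly increasing function of `m`, so every point lies in exactly one set of each level.
Each step up at least doubles the measure, which gives (v).
-/

open Real Function
open scoped ENNReal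

theorem StrictMono.existsUnique_mem_Ico_int {f : ℤ → ℤ} (hf : StrictMono f) (j : ℤ) :
    ∃! m, j ∈ Ico (f m) (f (m + 1)) := by
  -- `f m - m` is monotone, which bounds `f` below by `f 0 + m` for `m ≥ 0` and above for `m ≤ 0`
  have hg : Monotone fun m => f m - m :=
    monotone_int_of_le_succ fun m => by have := hf (lt_add_one m); omega
  obtain ⟨m, hm, hmax⟩ := Int.exists_greatest_of_bdd (P := fun m => f m ≤ j)
    ⟨max 0 (j - f 0), fun m hm => by
      by_contra! h
      have : f 0 - 0 ≤ f m - m := hg (le_max_left 0 (j - f 0) |>.trans h.le)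
      omega⟩
    ⟨min 0 (j - f 0), by
      have : f (min 0 (j - f 0)) - min 0 (j - f 0) ≤ f 0 - 0 := hg (min_le_left 0 (j - f 0))
      omega⟩
  refine ⟨m, ⟨hm, not_le.mp fun h => by linarith [hmax _ h]⟩, fun m' ⟨hm'₁, hm'₂⟩ => ?_⟩
  have hle := hmax m' hm'₁
  by_contra hne
  linarith [hf.monotone (show m' + 1 ≤ m by omega)]

theorem Set.PairwiseDisjoint.existsUnique_superset {α : Type*} {S : Set (Set α)}
    (hS : S.PairwiseDisjoint id) {R : Set α} (hR : R.Nonempty) (h : ∃ R' ∈ S, R ⊆ R') :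
    ∃! R', R' ∈ S ∧ R ⊆ R' := by
  obtain ⟨R', hR'S, hRR'⟩ := h
  obtain ⟨x, hx⟩ := hR
  exact ⟨R', ⟨hR'S, hRR'⟩, fun R'' ⟨hR''S, hRR''⟩ => hS.elim_set hR''S hR'S x (hRR'' hx) (hRR' hx)⟩

section NestedPartitions

variable {α : Type*} {D : ℤ → Set (Set α)}

theorem subset_or_inter_eq_empty_of_le (hD : ∀ j, (D j).PairwiseDisjoint id)
    (hpar : ∀ j, ∀ R ∈ D j, ∃ R' ∈ D (j + 1), R ⊆ R') {l k : ℤ} (hlk : l ≤ k) {R R' : Set α}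
    (hR : R ∈ D l) (hR' : R' ∈ D k) : R ⊆ R' ∨ R ∩ R' = ∅ := by
  induction l, hlk using Int.leInductionDown generalizing R with
  | base =>
    by_cases h : R = R'
    · exact .inl h.le
    · exact .inr (disjoint_iff_inter_eq_empty.mp (hD k hR hR' h))
  | pred l _ ih =>
    obtain ⟨P, hP, hRP⟩ := hpar (l - 1) R hR
    rw [sub_add_cancel] at hP
    refine (ih hP).imp hRP.trans fun h => subset_empty_iff.mp ?_
    exact h ▸ inter_subset_inter_left R' hRP

end NestedPartitions

theorem ENNReal.two_mul_le_and_le_two_pow_mul {n : ℕ} (hn : 1 ≤ n) {a b : ℝ≥0∞}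
    (h : a = 2 ^ n * b ∨ a = 2 * b) : 2 * b ≤ a ∧ a ≤ 2 ^ n * b := by
  have h2n : (2 : ℝ≥0∞) ≤ 2 ^ n := le_self_pow₀ one_le_two (by omega)
  rcases h with rfl | rfl
  · exact ⟨by gcongr, le_rfl⟩
  · exact ⟨le_rfl, by gcongr⟩

theorem ENNReal.le_two_thirds_mul_of_two_mul_le {a b : ℝ≥0∞} (h : 2 * b ≤ a) : b ≤ 2 / 3 * a :=
  calc b ≤ 2 / 3 * 2 * b := le_mul_of_one_le_left' <| by
        rw [← ENNReal.mul_div_right_comm, ENNReal.le_div_iff_mul_le (by simp) (by simp)]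
        norm_num
    _ = 2 / 3 * (2 * b) := mul_assoc _ _ _
    _ ≤ 2 / 3 * a := by gcongr

section Doubling

variable {w : ℤ → ℝ≥0∞}

theorem two_pow_mul_le_of_two_mul_le (hw : ∀ j, 2 * w j ≤ w (j + 1)) (j : ℤ) (k : ℕ) :
    2 ^ k * w j ≤ w (j + k) := by
  induction k with
  | zero => simp
  | succ k ih =>
    calc 2 ^ (k + 1) * w j = 2 * (2 ^ k * w j) := by ring
      _ ≤ 2 * w (j + k) := by gcongr
      _ ≤ w (j + (k + 1 : ℕ)) := by push_cast; rw [← add_assoc]; exact hw _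

theorem tendsto_atTop_nhds_top_of_two_mul_le (hw : ∀ j, 2 * w j ≤ w (j + 1)) (h0 : w 0 ≠ 0) :
    Tendsto w atTop (𝓝 ∞) := by
  have hmono : Monotone w := monotone_int_of_le_succ fun j =>
    le_mul_of_one_le_left' one_le_two |>.trans (hw j)
  have hgrow : Tendsto (fun k : ℕ => 2 ^ k * w 0) atTop (𝓝 ∞) :=
    ENNReal.top_mul h0 ▸ ENNReal.Tendsto.mul_const
      (ENNReal.tendsto_pow_atTop_nhds_top_iff.mpr ENNReal.one_lt_two) (.inl ENNReal.top_ne_zero)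
  have hsup : ⨆ j, w j = ∞ := top_le_iff.mp <| le_of_tendsto' hgrow fun k =>
    (two_pow_mul_le_of_two_mul_le hw 0 k).trans (le_iSup w _)
  exact hsup ▸ tendsto_atTop_iSup hmono

theorem tendsto_atBot_nhds_zero_of_two_mul_le (hw : ∀ j, 2 * w j ≤ w (j + 1)) (h0 : w 0 ≠ ∞) :
    Tendsto w atBot (𝓝 0) := by
  have hmono : Monotone w := monotone_int_of_le_succ fun j =>
    le_mul_of_one_le_left' one_le_two |>.trans (hw j)
  have hshrink : Tendsto (fun k : ℕ => w 0 * 2⁻¹ ^ k) atTop (𝓝 0) := by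
    simpa using ENNReal.Tendsto.const_mul
      (ENNReal.tendsto_pow_atTop_nhds_zero_of_lt_one
        (ENNReal.inv_lt_one.mpr ENNReal.one_lt_two)) (.inr h0)
  have hinf : ⨅ j, w j = 0 := le_bot_iff.mp <| ge_of_tendsto' hshrink fun k => by
    have h := two_pow_mul_le_of_two_mul_le hw (-k) k
    rw [neg_add_cancel] at h
    calc ⨅ j, w j ≤ w (-k) := iInf_le w _
      _ ≤ w 0 * 2⁻¹ ^ k := by
        rw [← ENNReal.inv_pow, ← div_eq_mul_inv,
          ENNReal.le_div_iff_mul_le (.inl (by positivity)) (.inl (by simp)), mul_comm]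
        exact h
  exact hinf ▸ tendsto_atBot_iInf hmono

end Doubling

namespace CZGrid

def dyadicIco (k m : ℤ) : Set ℝ := Ico (m * 2 ^ k) ((m + 1) * 2 ^ k)

theorem mem_dyadicIco_iff {k m : ℤ} {t : ℝ} : t ∈ dyadicIco k m ↔ ⌊t / 2 ^ k⌋ = m := by
  have h : (0 : ℝ) < 2 ^ k := by positivity
  rw [Int.floor_eq_iff, le_div_iff₀ h, div_lt_iff₀ h]
  rfl

theorem floor_div_two_zpow_add_one (k : ℤ) (t : ℝ) :
    ⌊t / 2 ^ (k + 1)⌋ = ⌊t / 2 ^ k⌋ / 2 := by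
  rw [zpow_add_one₀ two_ne_zero, ← div_div]
  exact_mod_cast Int.floor_div_natCast (t / 2 ^ k) 2

theorem dyadicIco_subset_dyadicIco_div_two (k m : ℤ) : dyadicIco k m ⊆ dyadicIco (k + 1) (m / 2) :=
  fun t ht => by rw [mem_dyadicIco_iff, floor_div_two_zpow_add_one, mem_dyadicIco_iff.mp ht]

theorem dyadicIco_add_one (k m : ℤ) :
    dyadicIco (k + 1) m = ⋃ b : Fin 2, dyadicIco k (2 * m + b) := by
  ext t
  simp only [mem_iUnion, mem_dyadicIco_iff, floor_div_two_zpow_add_one]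
  constructor
  · intro h
    refine ⟨⟨(⌊t / 2 ^ k⌋ % 2).toNat, by omega⟩, ?_⟩
    simp only
    omega
  · rintro ⟨b, hb⟩
    omega

theorem pairwise_disjoint_dyadicIco (k : ℤ) : Pairwise (Disjoint on dyadicIco k) :=
  fun _ _ hne => disjoint_left.mpr fun _ h h' =>
    hne ((mem_dyadicIco_iff.mp h).symm.trans (mem_dyadicIco_iff.mp h'))

theorem volume_dyadicIco (k m : ℤ) : volume (dyadicIco k m) = ENNReal.ofReal (2 ^ k) := by
  rw [dyadicIco, Real.volume_Ico]
  ring_nf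

noncomputable def dyadicCenter (k m : ℤ) : ℝ := (m + 1 / 2) * 2 ^ k

theorem dyadicIco_eq_Ico_dyadicCenter (k m : ℤ) :
    dyadicIco k m = Ico (dyadicCenter k m - 2 ^ k / 2) (dyadicCenter k m + 2 ^ k / 2) := by
  rw [dyadicIco, dyadicCenter]
  ring_nf

theorem abs_dyadicCenter_sub_le (k m : ℤ) :
    |dyadicCenter k m - dyadicCenter (k + 1) (m / 2)| ≤ 2 ^ k / 2 := by
  have hm : (m : ℝ) = 2 * ((m / 2 : ℤ) : ℝ) + ((m % 2 : ℤ) : ℝ) := by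
    exact_mod_cast (Int.mul_ediv_add_emod m 2).symm
  have hk : (0 : ℝ) < 2 ^ k := by positivity
  rw [dyadicCenter, dyadicCenter, hm, zpow_add_one₀ two_ne_zero, abs_le]
  rcases Int.emod_two_eq_zero_or_one m with h | h <;> rw [h] <;> push_cast <;>
    constructor <;> nlinarith

def dyadicCube (n : ℕ) (k : ℤ) (v : Fin n → ℤ) : Set (Fin n → ℝ) :=
  univ.pi fun i => dyadicIco k (v i)

theorem mem_dyadicCube_iff {n : ℕ} {k : ℤ} {v : Fin n → ℤ} {x : Fin n → ℝ} :
    x ∈ dyadicCube n k v ↔ (fun i => ⌊x i / 2 ^ k⌋) = v := by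
  simp only [dyadicCube, mem_univ_pi, mem_dyadicIco_iff, funext_iff]

theorem dyadicCube_subset_dyadicCube_div_two (n : ℕ) (k : ℤ) (v : Fin n → ℤ) :
    dyadicCube n k v ⊆ dyadicCube n (k + 1) (v / 2) :=
  pi_mono fun i _ => dyadicIco_subset_dyadicIco_div_two k (v i)

theorem dyadicCube_add_one (n : ℕ) (k : ℤ) (v : Fin n → ℤ) :
    dyadicCube n (k + 1) v = ⋃ δ : Fin n → Fin 2, dyadicCube n k fun i => 2 * v i + δ i := by
  simp only [dyadicCube, dyadicIco_add_one]
  exact (iUnion_univ_pi fun i (b : Fin 2) => dyadicIco k (2 * v i + b)).symm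

theorem pairwise_disjoint_dyadicCube (n : ℕ) (k : ℤ) : Pairwise (Disjoint on dyadicCube n k) :=
  fun v v' hne => by
    obtain ⟨i, hi⟩ := Function.ne_iff.mp hne
    exact disjoint_univ_pi.mpr ⟨i, pairwise_disjoint_dyadicIco k hi⟩

theorem volume_dyadicCube (n : ℕ) (k : ℤ) (v : Fin n → ℤ) :
    volume (dyadicCube n k v) = ENNReal.ofReal (2 ^ k) ^ n := by
  simp [dyadicCube, volume_pi_pi, volume_dyadicIco]

noncomputable def czLower (t r : ℝ) : ℝ :=
  if r < 1 then exp 2 * exp t * r else exp t * exp (2 * r)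

noncomputable def czUpper (t r : ℝ) : ℝ :=
  if r < 1 then exp 8 * exp t * r else exp t * exp (8 * r)

theorem czParam_of_le_of_lt {n : ℕ} {Q : Set (Fin n → ℝ)} {L : ℝ} {c : Fin n → ℝ} {t r : ℝ}
    (hQ : IsDyadicCube n Q L c) (hr : 0 < r) (hlow : czLower t r ≤ L) (hup : L < czUpper t r) :
    CZParam n Q L c t r := by
  refine ⟨hQ, hr, fun h => ?_, fun h => ?_⟩
  · simp only [czLower, czUpper, if_pos h] at hlow hup
    exact ⟨hlow, hup⟩
  · simp only [czLower, czUpper, if_neg (not_lt.mpr h)] at hlow hup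
    exact ⟨hlow, hup⟩

theorem czLower_pos (t : ℝ) {r : ℝ} (hr : 0 < r) : 0 < czLower t r := by
  unfold czLower
  split_ifs <;> positivity

theorem czLower_add_le (t : ℝ) {r δ : ℝ} (hr : 0 < r) (hδ : δ ≤ r) :
    czLower (t + δ) r ≤ czLower t (2 * r) := by
  unfold czLower
  rcases lt_or_ge (2 * r) 1 with h2r | h2r
  · rw [if_pos (by linarith), if_pos h2r]
    have hδ2 : exp δ ≤ 2 :=
      calc exp δ ≤ exp (log 2) := exp_le_exp.mpr (by linarith [log_two_gt_d9])
        _ = 2 := exp_log two_pos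
    calc exp 2 * exp (t + δ) * r = exp 2 * exp t * r * exp δ := by rw [exp_add]; ring
      _ ≤ exp 2 * exp t * r * 2 := by gcongr
      _ = exp 2 * exp t * (2 * r) := by ring
  rcases lt_or_ge r 1 with hr1 | hr1
  · rw [if_pos hr1, if_neg h2r.not_gt]
    -- `r ≤ e^{r-1}` absorbs the linear factor `r` into the exponent
    calc exp 2 * exp (t + δ) * r ≤ exp 2 * exp (t + r) * exp (r - 1) := by
          gcongr
          linarith [add_one_le_exp (r - 1)]
      _ = exp t * exp (1 + 2 * r) := by simp only [← exp_add]; ring_nf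
      _ ≤ exp t * exp (2 * (2 * r)) := by gcongr; linarith
  · rw [if_neg hr1.not_gt, if_neg (by linarith)]
    simp only [← exp_add]
    exact exp_le_exp.mpr (by linarith)

theorem two_mul_czLower_le (t : ℝ) {r δ : ℝ} (hr : 0 < r) (hδ : -r ≤ δ) :
    2 * czLower t (2 * r) ≤ czUpper (t + δ) r := by
  unfold czLower czUpper
  rcases lt_or_ge (2 * r) 1 with h2r | h2r
  · rw [if_pos h2r, if_pos (by linarith)]
    have h4 : 4 ≤ exp (6 + δ) := by linarith [add_one_le_exp (6 + δ)]
    have hsplit : exp 8 * exp (t + δ) = exp 2 * exp t * exp (6 + δ) := by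
      simp only [← exp_add]; ring_nf
    calc 2 * (exp 2 * exp t * (2 * r)) = exp 2 * exp t * r * 4 := by ring
      _ ≤ exp 2 * exp t * r * exp (6 + δ) := by gcongr
      _ = exp 8 * exp (t + δ) * r := by rw [hsplit]; ring
  rcases lt_or_ge r 1 with hr1 | hr1
  · rw [if_neg h2r.not_gt, if_pos hr1]
    have h4 : 4 ≤ exp 3 := by linarith [add_one_le_exp 3]
    have hsplit : exp 8 * exp (t - 1) = exp t * exp 4 * exp 3 := by
      simp only [← exp_add]; ring_nf
    calc 2 * (exp t * exp (2 * (2 * r))) ≤ 2 * (exp t * exp 4) := by gcongr; linarith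
      _ ≤ exp 8 * exp (t - 1) * (1 / 2) := by
          rw [hsplit]; nlinarith [mul_pos (exp_pos t) (exp_pos 4)]
      _ ≤ exp 8 * exp (t + δ) * r := by gcongr <;> linarith
  · rw [if_neg h2r.not_gt, if_neg hr1.not_gt]
    have h2 : 2 ≤ exp (δ + 4 * r) := by linarith [add_one_le_exp (δ + 4 * r)]
    calc 2 * (exp t * exp (2 * (2 * r))) ≤ exp (δ + 4 * r) * (exp t * exp (2 * (2 * r))) := by
          gcongr
      _ = exp (t + δ) * exp (8 * r) := by simp only [← exp_add]; ring_nf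

noncomputable def minSideExp (m q : ℤ) : ℤ :=
  Int.clog 2 (czLower (dyadicCenter m q) (2 ^ m / 2))

def sideRange (m q : ℤ) : Set ℤ := Icc (minSideExp m q) (minSideExp (m + 1) (q / 2))

theorem two_mul_zpow_div_two (m : ℤ) : 2 * ((2 : ℝ) ^ m / 2) = 2 ^ (m + 1) / 2 := by
  rw [zpow_add_one₀ two_ne_zero]
  ring

theorem minSideExp_le_minSideExp_div_two (m q : ℤ) :
    minSideExp m q ≤ minSideExp (m + 1) (q / 2) := by
  obtain ⟨-, hδ⟩ := abs_le.mp (abs_dyadicCenter_sub_le m q)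
  have hr : (0 : ℝ) < 2 ^ m / 2 := by positivity
  have h := czLower_add_le (dyadicCenter (m + 1) (q / 2)) hr hδ
  rw [add_sub_cancel, two_mul_zpow_div_two] at h
  exact Int.clog_mono_right (czLower_pos _ hr) h

theorem czLower_le_two_zpow_of_mem_sideRange {m q s : ℤ} (hs : s ∈ sideRange m q) :
    czLower (dyadicCenter m q) (2 ^ m / 2) ≤ 2 ^ s ∧
      (2 : ℝ) ^ s < czUpper (dyadicCenter m q) (2 ^ m / 2) := by
  have hr : (0 : ℝ) < 2 ^ m / 2 := by positivity
  have hr' : (0 : ℝ) < 2 ^ (m + 1) / 2 := by positivity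
  constructor
  · exact_mod_cast (Int.le_zpow_iff_clog_le one_lt_two (czLower_pos _ hr)).mpr hs.1
  · obtain ⟨hδ, -⟩ := abs_le.mp (abs_dyadicCenter_sub_le m q)
    have hup := two_mul_czLower_le (dyadicCenter (m + 1) (q / 2)) hr hδ
    rw [add_sub_cancel, two_mul_zpow_div_two] at hup
    have hclog : (2 : ℝ) ^ (minSideExp (m + 1) (q / 2) - 1) <
        czLower (dyadicCenter (m + 1) (q / 2)) (2 ^ (m + 1) / 2) := by
      exact_mod_cast Int.zpow_pred_clog_lt_self one_lt_two (czLower_pos _ hr')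
    calc (2 : ℝ) ^ s ≤ 2 ^ minSideExp (m + 1) (q / 2) := zpow_le_zpow_right₀ one_le_two hs.2
      _ = 2 * 2 ^ (minSideExp (m + 1) (q / 2) - 1) := by
          rw [← zpow_one_add₀ two_ne_zero, add_sub_cancel]
      _ < 2 * czLower (dyadicCenter (m + 1) (q / 2)) (2 ^ (m + 1) / 2) := by gcongr
      _ ≤ _ := hup

def node (n : ℕ) (s : ℤ) (v : Fin n → ℤ) (m q : ℤ) : Set (Sp n) :=
  dyadicCube n s v ×ˢ dyadicIco m q

theorem mem_node_iff {n : ℕ} {s m q : ℤ} {v : Fin n → ℤ} {x : Sp n} :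
    x ∈ node n s v m q ↔ (fun i => ⌊x.1 i / 2 ^ s⌋) = v ∧ ⌊x.2 / 2 ^ m⌋ = q := by
  rw [node, mem_prod, mem_dyadicCube_iff, mem_dyadicIco_iff]

theorem isCZSet_node {n : ℕ} {s m q : ℤ} (v : Fin n → ℤ) (hs : s ∈ sideRange m q) :
    IsCZSet n (node n s v m q) := by
  obtain ⟨hlow, hup⟩ := czLower_le_two_zpow_of_mem_sideRange hs
  refine ⟨dyadicCube n s v, 2 ^ s, fun i => (v i + 1 / 2) * 2 ^ s, dyadicCenter m q, 2 ^ m / 2,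
    czParam_of_le_of_lt ⟨s, v, rfl, ?_, rfl⟩ (by positivity) hlow hup, ?_⟩
  · ext x
    simp [dyadicCube, dyadicIco]
  · rw [node, czSet, dyadicIco_eq_Ico_dyadicCenter]

theorem volume_node (n : ℕ) (s : ℤ) (v : Fin n → ℤ) (m q : ℤ) :
    volume (node n s v m q) = ENNReal.ofReal (2 ^ s) ^ n * ENNReal.ofReal (2 ^ m) := by
  rw [node, Measure.volume_eq_prod, Measure.prod_prod, volume_dyadicCube, volume_dyadicIco]

theorem ofReal_two_zpow_add_one (k : ℤ) :
    ENNReal.ofReal (2 ^ (k + 1)) = 2 * ENNReal.ofReal (2 ^ k) := by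
  rw [zpow_add_one₀ two_ne_zero, mul_comm, ENNReal.ofReal_mul zero_le_two, ENNReal.ofReal_ofNat]

noncomputable def levelStart (t : ℝ) (m : ℤ) : ℤ := m + minSideExp m ⌊t / 2 ^ m⌋

theorem strictMono_levelStart (t : ℝ) : StrictMono (levelStart t) :=
  strictMono_int_of_lt_succ fun m => by
    have := minSideExp_le_minSideExp_div_two m ⌊t / 2 ^ m⌋
    rw [← floor_div_two_zpow_add_one] at this
    unfold levelStart
    omega

theorem mem_sideRange_floor_iff {t : ℝ} {s m : ℤ} :
    s ∈ sideRange m ⌊t / 2 ^ m⌋ ↔ s + m ∈ Ico (levelStart t m) (levelStart t (m + 1)) := by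
  simp only [sideRange, levelStart, mem_Icc, mem_Ico, floor_div_two_zpow_add_one]
  omega

def czGrid (n : ℕ) (j : ℤ) : Set (Set (Sp n)) :=
  {R | ∃ s m v q, s + m = j ∧ s ∈ sideRange m q ∧ R = node n s v m q}

section Grid

variable {n : ℕ} {j : ℤ} {R R' : Set (Sp n)}

theorem isCZSet_of_mem_czGrid (hR : R ∈ czGrid n j) : IsCZSet n R := by
  obtain ⟨s, m, v, q, -, hs, rfl⟩ := hR
  exact isCZSet_node v hs

theorem volume_pos_of_mem_czGrid (hR : R ∈ czGrid n j) : 0 < volume R := by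
  obtain ⟨s, m, v, q, -, -, rfl⟩ := hR
  rw [volume_node]
  have := ENNReal.ofReal_pos.mpr (zpow_pos (two_pos (α := ℝ)) s)
  have := ENNReal.ofReal_pos.mpr (zpow_pos (two_pos (α := ℝ)) m)
  positivity

theorem volume_ne_top_of_mem_czGrid (hR : R ∈ czGrid n j) : volume R ≠ ∞ := by
  obtain ⟨s, m, v, q, -, -, rfl⟩ := hR
  rw [volume_node]
  finiteness

theorem eq_of_mem_czGrid (hR : R ∈ czGrid n j) (hR' : R' ∈ czGrid n j) {x : Sp n}
    (hx : x ∈ R) (hx' : x ∈ R') : R = R' := by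
  obtain ⟨s, m, v, q, hj, hs, rfl⟩ := hR
  obtain ⟨s', m', v', q', hj', hs', rfl⟩ := hR'
  obtain ⟨rfl, rfl⟩ := mem_node_iff.mp hx
  obtain ⟨rfl, rfl⟩ := mem_node_iff.mp hx'
  rw [mem_sideRange_floor_iff, hj] at hs
  rw [mem_sideRange_floor_iff, hj'] at hs'
  obtain rfl : m = m' := ((strictMono_levelStart x.2).existsUnique_mem_Ico_int j).unique hs hs'
  obtain rfl : s = s' := by omega
  rfl

theorem pairwiseDisjoint_czGrid (n : ℕ) (j : ℤ) : (czGrid n j).PairwiseDisjoint id :=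
  fun _ hR _ hR' hne => disjoint_left.mpr fun _ hx hx' => hne (eq_of_mem_czGrid hR hR' hx hx')

theorem sUnion_czGrid (n : ℕ) (j : ℤ) : ⋃₀ czGrid n j = univ := by
  refine eq_univ_of_forall fun x => ?_
  obtain ⟨m, hm, -⟩ := (strictMono_levelStart x.2).existsUnique_mem_Ico_int j
  refine ⟨node n (j - m) _ m ⌊x.2 / 2 ^ m⌋, ⟨j - m, m, _, _, sub_add_cancel j m,
    mem_sideRange_floor_iff.mpr (by rwa [sub_add_cancel]), rfl⟩, mem_node_iff.mpr ⟨rfl, rfl⟩⟩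

theorem exists_parent (hn : 1 ≤ n) (hR : R ∈ czGrid n j) :
    ∃ R' ∈ czGrid n (j + 1), R ⊆ R' ∧ 2 * volume R ≤ volume R' ∧ volume R' ≤ 2 ^ n * volume R := by
  obtain ⟨s, m, v, q, rfl, ⟨hs₁, hs₂⟩, rfl⟩ := hR
  rcases hs₂.lt_or_eq with hlt | rfl
  · refine ⟨node n (s + 1) (v / 2) m q, ⟨s + 1, m, v / 2, q, by ring, ⟨by omega, hlt⟩, rfl⟩,
      prod_mono (dyadicCube_subset_dyadicCube_div_two n s v) le_rfl,
      ENNReal.two_mul_le_and_le_two_pow_mul hn (.inl ?_)⟩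
    simp only [volume_node, ofReal_two_zpow_add_one]
    ring
  · refine ⟨node n (minSideExp (m + 1) (q / 2)) v (m + 1) (q / 2),
      ⟨_, m + 1, v, q / 2, by ring, ⟨le_rfl, minSideExp_le_minSideExp_div_two _ _⟩, rfl⟩,
      prod_mono le_rfl (dyadicIco_subset_dyadicIco_div_two m q),
      ENNReal.two_mul_le_and_le_two_pow_mul hn (.inr ?_)⟩
    simp only [volume_node, ofReal_two_zpow_add_one]
    ring

theorem exists_split (hn : 1 ≤ n) (hR : R ∈ czGrid n j) :
    ∃ k : ℕ, (k = 2 ∨ k = 2 ^ n) ∧ ∃ Rs : Fin k → Set (Sp n),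
      (∀ i, Rs i ∈ czGrid n (j - 1)) ∧ Pairwise (Disjoint on Rs) ∧ R = ⋃ i, Rs i ∧
      ∀ i, 2 * volume (Rs i) ≤ volume R ∧ volume R ≤ 2 ^ n * volume (Rs i) := by
  obtain ⟨s, m, v, q, rfl, ⟨hs₁, hs₂⟩, rfl⟩ := hR
  rcases hs₁.lt_or_eq with hlt | rfl
  · obtain ⟨s, rfl⟩ : ∃ s', s = s' + 1 := ⟨s - 1, by ring⟩
    let e : (Fin n → Fin 2) ≃ Fin (2 ^ n) := finFunctionFinEquiv
    let child : (Fin n → Fin 2) → Fin n → ℤ := fun δ i => 2 * v i + δ i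
    have hchild : Injective child := fun δ δ' h => funext fun i => by
      have := congrFun h i
      simp only [child] at this
      omega
    refine ⟨2 ^ n, .inr rfl, fun i => node n s (child (e.symm i)) m q,
      fun i => ⟨s, m, _, q, by ring, ⟨by omega, by omega⟩, rfl⟩, fun i i' hne => ?_, ?_,
      fun i => ENNReal.two_mul_le_and_le_two_pow_mul hn (.inl ?_)⟩
    · exact (pairwise_disjoint_dyadicCube n s
        (hchild.ne (e.symm.injective.ne hne))).set_prod_left _ _
    · rw [node, dyadicCube_add_one, iUnion_prod_const, ← e.symm.surjective.iUnion_comp]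
      rfl
    · simp only [volume_node, ofReal_two_zpow_add_one]
      ring
  · obtain ⟨m, rfl⟩ : ∃ m', m = m' + 1 := ⟨m - 1, by ring⟩
    have hq (b : Fin 2) : (2 * q + b) / 2 = q := by omega
    refine ⟨2, .inl rfl, fun b => node n (minSideExp (m + 1) q) v m (2 * q + b),
      fun b => ⟨_, m, v, _, by ring, ⟨?_, by rw [hq]⟩, rfl⟩, fun b b' hne => ?_, ?_,
      fun b => ENNReal.two_mul_le_and_le_two_pow_mul hn (.inr ?_)⟩
    · simpa only [hq] using minSideExp_le_minSideExp_div_two m (2 * q + b)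
    · refine (pairwise_disjoint_dyadicIco m ?_).set_prod_right _ _
      simpa [Fin.val_inj] using hne
    · rw [node, dyadicIco_add_one, prod_iUnion]
      rfl
    · simp only [volume_node, ofReal_two_zpow_add_one]
      ring

end Grid

end CZGrid

/-- Theorem 3.1. There exists a collection `{𝒟_j}_{j ∈ ℤ}` of partitions
of `S` into pairwise disjoint Calderón–Zygmund sets satisfying properties (i)–(v):
(i) `S = ⋃_{R ∈ 𝒟_j} R`; (ii) nesting; (iii) unique parent in `𝒟_{j+1}` of comparable
measure; (iv) splitting into `2` or `2ⁿ` pieces of `𝒟_{j−1}` of comparable measure;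
(v) `ρ(R_j^x) → 0` as `j → −∞` and `ρ(R_j^x) → ∞` as `j → +∞`. -/
theorem exists_dyadicGrid (n : ℕ) (hn : 1 ≤ n) :
    ∃ D : ℤ → Set (Set (Sp n)), IsDyadicGrid n D := by
  open CZGrid in
  have hdisj := pairwiseDisjoint_czGrid n
  have hpar (j : ℤ) (R : Set (Sp n)) (hR : R ∈ czGrid n j) : ∃ R' ∈ czGrid n (j + 1), R ⊆ R' :=
    let ⟨R', hR', hRR', _⟩ := exists_parent hn hR
    ⟨R', hR', hRR'⟩
  have huniq (j : ℤ) (R : Set (Sp n)) (hR : R ∈ czGrid n j) :=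
    (hdisj (j + 1)).existsUnique_superset
      (nonempty_of_measure_ne_zero (volume_pos_of_mem_czGrid hR).ne') (hpar j R hR)
  refine ⟨czGrid n, fun j R => isCZSet_of_mem_czGrid, hdisj, sUnion_czGrid n,
    fun l k hlk R hR R' hR' => subset_or_inter_eq_empty_of_le hdisj hpar hlk hR hR', huniq,
    fun j R hR R' hR' hRR' => ?_, fun j R hR => ?_, fun x Rx hRx => ?_⟩
  · obtain ⟨P, hP, hRP, -, hvol⟩ := exists_parent hn hR
    rwa [(huniq j R hR).unique ⟨hR', hRR'⟩ ⟨hP, hRP⟩]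
  · obtain ⟨k, hk, Rs, hmem, hdisjRs, hunion, hvol⟩ := exists_split hn hR
    exact ⟨k, hk, Rs, hmem, hdisjRs, hunion, fun i =>
      ⟨ENNReal.div_le_of_le_mul (mul_comm (volume (Rs i)) _ ▸ (hvol i).2),
        ENNReal.le_two_thirds_mul_of_two_mul_le (hvol i).1⟩⟩
  · have hw (j : ℤ) : 2 * volume (Rx j) ≤ volume (Rx (j + 1)) := by
      obtain ⟨P, hP, hRP, hvol, -⟩ := exists_parent hn (hRx j).1
      rwa [eq_of_mem_czGrid (hRx (j + 1)).1 hP (hRx (j + 1)).2 (hRP (hRx j).2)]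
    exact ⟨tendsto_atBot_nhds_zero_of_two_mul_le hw (volume_ne_top_of_mem_czGrid (hRx 0).1),
      tendsto_atTop_nhds_top_of_two_mul_le hw (volume_pos_of_mem_czGrid (hRx 0).1).ne'⟩
end

section
/- Let {𝒟_j}_{j∈ℤ} be a dyadic grid on S with 𝒟 = ∪_j 𝒟_j, let f be a locally integrable function on S and let α > 0 be such that Ω_α = {x ∈ S : ℳ_𝒟 f(x) > α} has finite measure. Then Ω_α is a disjoint union of countably many dyadic sets {R_j}_j ⊆ 𝒟 satisfying α < ρ(R_j)⁻¹ ∫_{R_j} |f| dρ ≤ 2ⁿα for all j. -/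
open MeasureTheory Set Filter
open scoped ENNReal NNReal Topology

/-!
Every point of `Ω_α` lies in a dyadic set with average above `α`. Along the nested dyadic sets
containing a fixed point the measures tend to infinity, so finiteness of `ρ(Ω_α)` bounds the
levels at which the average exceeds `α`; the maximal sets with average above `α` therefore cover
`Ω_α`, and, the grid being nested, they are pairwise disjoint, hence countably many since each
has positive measure. The parent of a maximal set has
average at most `α` and measure at most `2ⁿ` times larger, whence the upper bound.
-/

section Measure

variable {α : Type*} [MeasurableSpace α] {μ : Measure α}

def largeAverageSets (μ : Measure α) (𝒜 : Set (Set α)) (g : α → ℝ≥0∞) (a : ℝ≥0∞) :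
    Set (Set α) :=
  {R ∈ 𝒜 | a < ⨍⁻ y in R, g y ∂μ}

theorem setLAverage_eq_inv_mul_lintegral (g : α → ℝ≥0∞) (s : Set α) :
    ⨍⁻ y in s, g y ∂μ = (μ s)⁻¹ * ∫⁻ y in s, g y ∂μ := by
  rw [setLAverage_eq, ENNReal.div_eq_inv_mul]

theorem measure_ne_zero_of_lt_setLAverage {g : α → ℝ≥0∞} {s : Set α} {a : ℝ≥0∞}
    (h : a < ⨍⁻ y in s, g y ∂μ) : μ s ≠ 0 := by
  intro hs
  rw [Measure.restrict_eq_zero.mpr hs, laverage_zero_measure] at h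
  exact not_lt_zero h

theorem setLAverage_le_mul_of_subset {g : α → ℝ≥0∞} {R P : Set α} {a c : ℝ≥0∞}
    (hRP : R ⊆ P) (hR₀ : μ R ≠ 0) (hR : μ R ≠ ∞) (hc : c ≠ ∞) (hPR : μ P ≤ c * μ R)
    (hP : ⨍⁻ y in P, g y ∂μ ≤ a) : ⨍⁻ y in R, g y ∂μ ≤ c * a := by
  have hPtop : μ P ≠ ∞ := ne_top_of_le_ne_top (ENNReal.mul_ne_top hc hR) hPR
  rw [setLAverage_eq, ENNReal.div_le_iff hR₀ hR]
  calc ∫⁻ y in R, g y ∂μ ≤ ∫⁻ y in P, g y ∂μ := lintegral_mono_set hRP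
    _ = μ P * ⨍⁻ y in P, g y ∂μ := (measure_mul_setLAverage g hPtop).symm
    _ ≤ c * μ R * a := mul_le_mul' hPR hP
    _ = c * a * μ R := by ring

theorem Set.PairwiseDisjoint.countable_of_measure_pos [SFinite μ] {𝒞 : Set (Set α)}
    (hdisj : 𝒞.PairwiseDisjoint id) (hmeas : ∀ R ∈ 𝒞, MeasurableSet R)
    (hpos : ∀ R ∈ 𝒞, 0 < μ R) : 𝒞.Countable := by
  have h := Measure.countable_meas_pos_of_disjoint_iUnion (μ := μ)
    (As := fun R : 𝒞 => (R : Set α)) (fun R => hmeas R R.2)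
    (fun R R' hne => hdisj R.2 R'.2 (Subtype.coe_ne_coe.mpr hne))
  have hall : {R : 𝒞 | 0 < μ R} = univ := eq_univ_of_forall fun R => hpos R R.2
  rw [hall, countable_univ_iff] at h
  exact countable_coe_iff.mp h

end Measure

theorem pairwiseDisjoint_setOf_maximal {α : Type*} {𝒜 : Set (Set α)}
    (h𝒜 : ∀ R ∈ 𝒜, ∀ R' ∈ 𝒜, ¬Disjoint R R' → R ⊆ R' ∨ R' ⊆ R) :
    {R | Maximal (· ∈ 𝒜) R}.PairwiseDisjoint id := by
  intro R hR R' hR' hne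
  by_contra hRR'
  rcases h𝒜 R hR.prop R' hR'.prop hRR' with hsub | hsub
  · exact hne (hR.eq_of_subset hR'.prop hsub)
  · exact hne (hR'.eq_of_subset hR.prop hsub).symm

theorem setOf_lt_maximalFn (n : ℕ) (𝒜 : Set (Set (Sp n))) (f : Sp n → ℝ) (a : ℝ≥0∞) :
    {x | a < maximalFn n 𝒜 f x} = ⋃₀ largeAverageSets volume 𝒜 (fun y => ‖f y‖₊) a := by
  ext x
  simp only [maximalFn, largeAverageSets, setLAverage_eq_inv_mul_lintegral, lt_iSup_iff,
    mem_ofPred_eq, mem_sUnion, exists_prop]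
  tauto

theorem IsCZSet.measurableSet {n : ℕ} {R : Set (Sp n)} (h : IsCZSet n R) : MeasurableSet R := by
  obtain ⟨Q, L, c, t, r, ⟨⟨k, m, -, rfl, -⟩, -⟩, rfl⟩ := h
  have hQ : {x : Fin n → ℝ | ∀ i, (m i : ℝ) * 2 ^ k ≤ x i ∧ x i < ((m i : ℝ) + 1) * 2 ^ k} =
      univ.pi fun i => Ico ((m i : ℝ) * 2 ^ k) (((m i : ℝ) + 1) * 2 ^ k) := by
    ext x
    simp
  rw [czSet, hQ]
  exact (MeasurableSet.univ_pi fun _ => measurableSet_Ico).prod measurableSet_Ico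

namespace IsDyadicGrid

variable {n : ℕ} {D : ℤ → Set (Set (Sp n))}

theorem isCZSet (hD : IsDyadicGrid n D) {j : ℤ} {R : Set (Sp n)} (hR : R ∈ D j) : IsCZSet n R :=
  hD.1 j R hR

theorem exists_mem (hD : IsDyadicGrid n D) (x : Sp n) (j : ℤ) : ∃ R ∈ D j, x ∈ R :=
  mem_sUnion.mp ((hD.2.2.1 j).symm ▸ mem_univ x)

theorem eq_of_mem (hD : IsDyadicGrid n D) {j : ℤ} {R R' : Set (Sp n)} {x : Sp n}
    (hR : R ∈ D j) (hR' : R' ∈ D j) (hx : x ∈ R) (hx' : x ∈ R') : R = R' :=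
  (hD.2.1 j).elim_set hR hR' x hx hx'

theorem subset_of_le (hD : IsDyadicGrid n D) {l k : ℤ} {R R' : Set (Sp n)} {x : Sp n}
    (hlk : l ≤ k) (hR : R ∈ D l) (hR' : R' ∈ D k) (hx : x ∈ R) (hx' : x ∈ R') : R ⊆ R' :=
  (hD.2.2.2.1 l k hlk R hR R' hR').resolve_right (Set.Nonempty.ne_empty ⟨x, hx, hx'⟩)

theorem subset_or_subset_of_not_disjoint (hD : IsDyadicGrid n D) {R R' : Set (Sp n)}
    (hR : R ∈ ⋃ j, D j) (hR' : R' ∈ ⋃ j, D j) (h : ¬Disjoint R R') : R ⊆ R' ∨ R' ⊆ R := by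
  obtain ⟨l, hl⟩ := mem_iUnion.mp hR
  obtain ⟨k, hk⟩ := mem_iUnion.mp hR'
  obtain ⟨x, hx, hx'⟩ := not_disjoint_iff.mp h
  rcases le_total l k with hlk | hkl
  · exact Or.inl (hD.subset_of_le hlk hl hk hx hx')
  · exact Or.inr (hD.subset_of_le hkl hk hl hx' hx)

theorem exists_parent (hD : IsDyadicGrid n D) {j : ℤ} {R : Set (Sp n)} (hR : R ∈ D j) :
    ∃ P ∈ D (j + 1), R ⊆ P ∧ volume P ≤ 2 ^ n * volume R := by
  obtain ⟨P, ⟨hP, hRP⟩, -⟩ := hD.2.2.2.2.1 j R hR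
  exact ⟨P, hP, hRP, hD.2.2.2.2.2.1 j R hR P hP hRP⟩

theorem tendsto_volume_atTop (hD : IsDyadicGrid n D) (x : Sp n) (Rx : ℤ → Set (Sp n))
    (hRx : ∀ j, Rx j ∈ D j ∧ x ∈ Rx j) : Tendsto (fun j => volume (Rx j)) atTop (𝓝 ∞) :=
  (hD.2.2.2.2.2.2.2 x Rx hRx).2

theorem bddAbove_levels (hD : IsDyadicGrid n D) {𝒜 : Set (Set (Sp n))}
    (hfin : volume (⋃₀ 𝒜) ≠ ∞) (x : Sp n) : BddAbove {j | ∃ R ∈ D j, x ∈ R ∧ R ∈ 𝒜} := by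
  choose Rx hRxD hxRx using hD.exists_mem x
  have htop := hD.tendsto_volume_atTop x Rx fun j => ⟨hRxD j, hxRx j⟩
  obtain ⟨j₁, hj₁⟩ := eventually_atTop.mp (htop.eventually (lt_mem_nhds hfin.lt_top))
  refine ⟨j₁, fun j ⟨R, hRD, hxR, hR𝒜⟩ => ?_⟩
  by_contra! hlt
  obtain rfl : R = Rx j := hD.eq_of_mem hRD (hRxD j) hxR (hxRx j)
  exact (hj₁ j hlt.le).not_ge (measure_mono (subset_sUnion_of_mem hR𝒜))

theorem exists_stopping_set (hD : IsDyadicGrid n D) {𝒜 : Set (Set (Sp n))}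
    (h𝒜 : 𝒜 ⊆ ⋃ j, D j) (hfin : volume (⋃₀ 𝒜) ≠ ∞) {x : Sp n} (hx : x ∈ ⋃₀ 𝒜) :
    ∃ j, ∃ R ∈ D j, x ∈ R ∧ R ∈ 𝒜 ∧ (∀ R' ∈ 𝒜, x ∈ R' → R' ⊆ R) ∧
      ∀ P ∈ D (j + 1), x ∈ P → P ∉ 𝒜 := by
  set J := {j | ∃ R ∈ D j, x ∈ R ∧ R ∈ 𝒜}
  obtain ⟨R₀, hR₀, hxR₀⟩ := hx
  obtain ⟨j₀, hj₀⟩ := mem_iUnion.mp (h𝒜 hR₀)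
  have hJ : J.Nonempty := ⟨j₀, R₀, hj₀, hxR₀, hR₀⟩
  have hbdd : BddAbove J := hD.bddAbove_levels hfin x
  obtain ⟨R, hRD, hxR, hR𝒜⟩ := Int.csSup_mem hJ hbdd
  refine ⟨sSup J, R, hRD, hxR, hR𝒜, fun R' hR' hxR' => ?_, fun P hPD hxP hP => ?_⟩
  · obtain ⟨k, hk⟩ := mem_iUnion.mp (h𝒜 hR')
    exact hD.subset_of_le (le_csSup hbdd ⟨R', hk, hxR', hR'⟩) hk hRD hxR' hxR
  · have := le_csSup hbdd ⟨P, hPD, hxP, hP⟩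
    omega

theorem sUnion_setOf_maximal (hD : IsDyadicGrid n D) {𝒜 : Set (Set (Sp n))}
    (h𝒜 : 𝒜 ⊆ ⋃ j, D j) (hfin : volume (⋃₀ 𝒜) ≠ ∞) :
    ⋃₀ {R | Maximal (· ∈ 𝒜) R} = ⋃₀ 𝒜 := by
  refine (sUnion_mono fun R hR => hR.prop).antisymm fun x hx => ?_
  obtain ⟨-, R, -, hxR, hR𝒜, hsub, -⟩ := hD.exists_stopping_set h𝒜 hfin hx
  exact ⟨R, ⟨hR𝒜, fun R' hR' hRR' => hsub R' hR' (hRR' hxR)⟩, hxR⟩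

theorem setLAverage_le_of_maximal (hD : IsDyadicGrid n D) {g : Sp n → ℝ≥0∞} {a : ℝ≥0∞}
    (hfin : volume (⋃₀ largeAverageSets volume (⋃ j, D j) g a) ≠ ∞) {R : Set (Sp n)}
    (hR : Maximal (· ∈ largeAverageSets volume (⋃ j, D j) g a) R) :
    ⨍⁻ y in R, g y ∂volume ≤ 2 ^ n * a := by
  have hR₀ : volume R ≠ 0 := measure_ne_zero_of_lt_setLAverage hR.prop.2
  obtain ⟨x, hxR⟩ := nonempty_of_measure_ne_zero hR₀
  obtain ⟨j, R', hR'D, -, hR', hsub, hstop⟩ :=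
    hD.exists_stopping_set (sep_subset _ _) hfin ⟨R, hR.prop, hxR⟩
  obtain rfl : R = R' := hR.eq_of_subset hR' (hsub R hR.prop hxR)
  obtain ⟨P, hPD, hRP, hPR⟩ := hD.exists_parent hR'D
  have hPa : ¬a < ⨍⁻ y in P, g y ∂volume := fun h => hstop P hPD (hRP hxR) ⟨mem_iUnion.mpr ⟨_, hPD⟩, h⟩
  exact setLAverage_le_mul_of_subset hRP hR₀
    (ne_top_of_le_ne_top hfin (measure_mono (subset_sUnion_of_mem hR.prop)))
    (ENNReal.pow_ne_top ENNReal.ofNat_ne_top) hPR (not_lt.mp hPa)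

end IsDyadicGrid

theorem dyadic_covering_lemma_general (n : ℕ)
    (D : ℤ → Set (Set (Sp n))) (hD : IsDyadicGrid n D)
    (f : Sp n → ℝ) (α : ℝ)
    (hfin : volume {x : Sp n | ENNReal.ofReal α < maximalFn n (⋃ j, D j) f x} ≠ ⊤) :
    ∃ 𝒞 : Set (Set (Sp n)), 𝒞.Countable ∧ 𝒞 ⊆ ⋃ j, D j ∧ 𝒞.PairwiseDisjoint id ∧
      {x : Sp n | ENNReal.ofReal α < maximalFn n (⋃ j, D j) f x} = ⋃₀ 𝒞 ∧
      ∀ R ∈ 𝒞, ENNReal.ofReal α < (volume R)⁻¹ * ∫⁻ y in R, ‖f y‖₊ ∂volume ∧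
        (volume R)⁻¹ * ∫⁻ y in R, ‖f y‖₊ ∂volume ≤ 2 ^ n * ENNReal.ofReal α := by
  set 𝒜 := largeAverageSets volume (⋃ j, D j) (fun y => (‖f y‖₊ : ℝ≥0∞)) (ENNReal.ofReal α)
  have h𝒜 : 𝒜 ⊆ ⋃ j, D j := sep_subset _ _
  rw [setOf_lt_maximalFn] at hfin ⊢
  have hdisj : {R | Maximal (· ∈ 𝒜) R}.PairwiseDisjoint id := pairwiseDisjoint_setOf_maximal
    fun R hR R' hR' => hD.subset_or_subset_of_not_disjoint (h𝒜 hR) (h𝒜 hR')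
  have hmeas : ∀ R ∈ {R | Maximal (· ∈ 𝒜) R}, MeasurableSet R := fun R hR => by
    obtain ⟨j, hj⟩ := mem_iUnion.mp (h𝒜 hR.prop)
    exact (hD.isCZSet hj).measurableSet
  refine ⟨{R | Maximal (· ∈ 𝒜) R},
    hdisj.countable_of_measure_pos hmeas
      fun R hR => pos_iff_ne_zero.mpr (measure_ne_zero_of_lt_setLAverage hR.prop.2),
    fun R hR => h𝒜 hR.prop, hdisj, (hD.sUnion_setOf_maximal h𝒜 hfin).symm, fun R hR => ?_⟩
  rw [← setLAverage_eq_inv_mul_lintegral]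
  exact ⟨hR.prop.2, hD.setLAverage_le_of_maximal hfin hR⟩

/-- covering lemma. If `f` is locally integrable and
`Ω_α = {ℳ_𝒟 f > α}` has finite measure, then `Ω_α` is a disjoint union of countably many
dyadic sets `{R_j}_j ⊆ 𝒟` with `α < ρ(R_j)⁻¹ ∫_{R_j} |f| dρ ≤ 2ⁿ α` for all `j`. -/
theorem dyadic_covering_lemma (n : ℕ) (hn : 1 ≤ n)
    (D : ℤ → Set (Set (Sp n))) (hD : IsDyadicGrid n D)
    (f : Sp n → ℝ) (hf : LocallyIntegrable f volume) (α : ℝ) (hα : 0 < α)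
    (hfin : volume {x : Sp n | ENNReal.ofReal α < maximalFn n (⋃ j, D j) f x} ≠ ⊤) :
    ∃ 𝒞 : Set (Set (Sp n)), 𝒞.Countable ∧ 𝒞 ⊆ ⋃ j, D j ∧ 𝒞.PairwiseDisjoint id ∧
      {x : Sp n | ENNReal.ofReal α < maximalFn n (⋃ j, D j) f x} = ⋃₀ 𝒞 ∧
      ∀ R ∈ 𝒞, ENNReal.ofReal α < (volume R)⁻¹ * ∫⁻ y in R, ‖f y‖₊ ∂volume ∧
        (volume R)⁻¹ * ∫⁻ y in R, ‖f y‖₊ ∂volume ≤ 2 ^ n * ENNReal.ofReal α :=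
  dyadic_covering_lemma_general n D hD f α hfin
end
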